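/- arXiv:1812.11340 — 2 statements merged into one kernel-verified Lean document; each statement's English description precedes it below -/
import Mathlib

section
/- Fix an integer n ≥ 2 and reals b₁ > b₂ ≥ … ≥ bₙ > 0, and let r ∈ ℝⁿ with rᵢ > 0 for all i. Then the set { τ > 0 : sin(bᵢτ/2) ≠ 0 for all i, and ψ(τ, r) = 0 } is nonempty and has a least element τ₁(r), and τ₁(r) > 2π/b₁. -/
/-!
Write `ψ = Σ rᵢ²/2 · φ(bᵢ, ·)` with `φ(b, τ) = 3τ − bτ² cot(bτ/2) − sin(bτ)/b`. With `u = bτ/2`,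
`φ(b, τ) = 2(3u sin u − sin²u cos u − 2u² cos u) / (b sin u)`, which is positive for `0 < u < π`
by `u cos u < sin u < u`; so `ψ > 0` on `(0, 2π/b₁)`, and `2π/b₁` is a pole.
At a pole `q ≠ 0` of `φ(b, ·)` the numerator and denominator of the cotangent term multiply to
`bτ² sin(bτ)/2`, which is negative just left of `q`, so `φ → +∞` there; as `φ` is odd in `τ`,
`φ → −∞` just right of a pole. Hence `ψ` is continuous on `(2π/b₁, min(4π/b₁, 2π/b₂))` and runs
from `−∞` to `+∞`; its first zero there, which exists by compactness and the intermediate value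
theorem, is the least admissible zero.
-/

open Real Finset Set

/-- `ψ(τ, r) = Σ_{i=1}^{n} (rᵢ²/2)·(3τ − bᵢτ²·cos(bᵢτ/2)/sin(bᵢτ/2) − sin(bᵢτ)/bᵢ)`. -/
noncomputable def psiSum (n : ℕ) (b r : ℕ → ℝ) (τ : ℝ) : ℝ :=
  ∑ i ∈ Finset.Icc 1 n, (r i) ^ 2 / 2 *
    (3 * τ - b i * τ ^ 2 * Real.cos (b i * τ / 2) / Real.sin (b i * τ / 2) -
      Real.sin (b i * τ) / b i)

open Filter Topology

theorem Filter.Tendsto.div_atTop_of_mul_pos {α 𝕜 : Type*} [Field 𝕜] [LinearOrder 𝕜]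
    [IsStrictOrderedRing 𝕜] [TopologicalSpace 𝕜] [OrderTopology 𝕜] {l : Filter α} {f g : α → 𝕜}
    {a : 𝕜} (hf : Tendsto f l (𝓝 a)) (ha : a ≠ 0)
    (hg : Tendsto g l (𝓝 0)) (hfg : ∀ᶠ x in l, 0 < f x * g x) :
    Tendsto (fun x => f x / g x) l atTop := by
  -- `f / g = f² · (f g)⁻¹` with `f g → 0⁺`
  have hprod : Tendsto (fun x => f x * g x) l (𝓝[>] 0) :=
    tendsto_nhdsWithin_iff.2 ⟨by simpa using hf.mul hg, hfg⟩
  refine ((hf.pow 2).pos_mul_atTop (by positivity) (tendsto_inv_nhdsGT_zero.comp hprod)).congr' ?_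
  filter_upwards [hfg] with x hx
  have hf0 : f x ≠ 0 := by rintro h; simp [h] at hx
  have hg0 : g x ≠ 0 := by rintro h; simp [h] at hx
  simp only [Function.comp_apply]
  field_simp

theorem Filter.tendsto_finset_sum_atTop {ι α G : Type*} [DecidableEq ι] [AddCommGroup G]
    [LinearOrder G] [IsOrderedAddMonoid G] {l : Filter α} {s : Finset ι} {f : ι → α → G} {i₀ : ι}
    (hi₀ : i₀ ∈ s) (htop : Tendsto (f i₀) l atTop)
    (hbdd : ∀ i ∈ s.erase i₀, ∃ c, ∀ᶠ x in l, c ≤ f i x) :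
    Tendsto (fun x => ∑ i ∈ s, f i x) l atTop := by
  choose! c hc using hbdd
  have hle : ∀ᶠ x in l, ∑ i ∈ s.erase i₀, c i ≤ ∑ i ∈ s.erase i₀, f i x := by
    filter_upwards [(eventually_all_finset _).2 hc] with x hx
    exact Finset.sum_le_sum hx
  refine (tendsto_atTop_add_left_of_le' l _ hle htop).congr fun x => ?_
  rw [add_comm, Finset.add_sum_erase s (fun i => f i x) hi₀]

theorem Real.sin_sq_mul_cos_add_two_mul_sq_mul_cos_lt {u : ℝ} (hu0 : 0 < u) (huπ : u < π) :
    sin u ^ 2 * cos u + 2 * u ^ 2 * cos u < 3 * u * sin u := by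
  have hs : 0 < sin u := sin_pos_of_pos_of_lt_pi hu0 huπ
  rcases le_or_gt (cos u) 0 with hc | hc
  · nlinarith [mul_pos hu0 hs, mul_nonneg (neg_nonneg.2 hc) (sq_nonneg (sin u)),
      mul_nonneg (neg_nonneg.2 hc) (sq_nonneg u)]
  · have hu2 : u < π / 2 := by
      by_contra! h
      linarith [cos_nonpos_of_pi_div_two_le_of_le h (by linarith)]
    have htan : u * cos u < sin u := by
      have := lt_tan hu0 hu2
      rwa [tan_eq_sin_div_cos, lt_div_iff₀ hc] at this
    nlinarith [sin_lt hu0, mul_pos hu0 hc, mul_pos hs hc, mul_pos hu0 hs]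

theorem Real.sin_ne_zero_of_pos_of_lt_two_pi {x : ℝ} (h0 : 0 < x) (h2 : x < 2 * π)
    (hπ : x ≠ π) : sin x ≠ 0 := by
  rw [← neg_ne_zero, ← sin_sub_pi]
  exact mt (sin_eq_zero_iff_of_lt_of_lt (by linarith) (by linarith)).1 (sub_ne_zero.2 hπ)

theorem exists_isLeast_zero_of_tendsto_atBot_atTop {f : ℝ → ℝ} {p q : ℝ} (hpq : p < q)
    (hf : ContinuousOn f (Ioo p q)) (hp : Tendsto f (𝓝[>] p) atBot)
    (hq : Tendsto f (𝓝[<] q) atTop) : ∃ x, IsLeast {x ∈ Ioo p q | f x = 0} x := by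
  obtain ⟨u, hu, hneg⟩ : ∃ u ∈ Ioo p q, ∀ x ∈ Ioc p u, f x < 0 := by
    obtain ⟨u, hpu, hsub⟩ := mem_nhdsGT_iff_exists_Ioc_subset.1
      ((hp.eventually_lt_atBot 0).and (Ioo_mem_nhdsGT hpq))
    exact ⟨u, (hsub ⟨hpu, le_rfl⟩).2, fun x hx => (hsub hx).1⟩
  obtain ⟨v, hv, huv, hvq⟩ : ∃ v, 0 < f v ∧ v ∈ Ioo u q :=
    ((hq.eventually_gt_atTop 0).and (Ioo_mem_nhdsLT hu.2)).exists
  have hsub : Icc u v ⊆ Ioo p q := Icc_subset_Ioo hu.1 hvq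
  have hcont : ContinuousOn f (Icc u v) := hf.mono hsub
  have hK : IsCompact (Icc u v ∩ f ⁻¹' {0}) := isCompact_Icc.of_isClosed_subset
    (hcont.preimage_isClosed_of_isClosed isClosed_Icc isClosed_singleton) inter_subset_left
  obtain ⟨z, hz, hz0⟩ :=
    intermediate_value_Icc huv.le hcont ⟨(hneg u ⟨hu.1, le_rfl⟩).le, hv.le⟩
  obtain ⟨x, ⟨hx, hx0⟩, hxK⟩ := hK.exists_isLeast ⟨z, hz, hz0⟩
  refine ⟨x, ⟨hsub hx, hx0⟩, fun y ⟨hy, hy0⟩ => ?_⟩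
  rcases le_or_gt y u with hyu | hyu
  · exact absurd hy0 (hneg y ⟨hy.1, hyu⟩).ne
  rcases le_or_gt y v with hyv | hyv
  · exact hxK ⟨⟨hyu.le, hyv⟩, hy0⟩
  · exact hx.2.trans hyv.le

noncomputable def psiTerm (b τ : ℝ) : ℝ :=
  3 * τ - b * τ ^ 2 * cos (b * τ / 2) / sin (b * τ / 2) - sin (b * τ) / b

theorem psiSum_eq_sum_psiTerm (n : ℕ) (b r : ℕ → ℝ) (τ : ℝ) :
    psiSum n b r τ = ∑ i ∈ Finset.Icc 1 n, r i ^ 2 / 2 * psiTerm (b i) τ := rfl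

theorem psiTerm_neg (b τ : ℝ) : psiTerm b (-τ) = -psiTerm b τ := by
  simp only [psiTerm, mul_neg, neg_div, sin_neg, cos_neg, neg_sq, div_neg]
  ring

theorem psiTerm_pos {b τ : ℝ} (hb : 0 < b) (hτ : 0 < τ) (h : b * τ < 2 * π) :
    0 < psiTerm b τ := by
  set u := b * τ / 2 with hu
  have hu0 : 0 < u := by positivity
  have hs : 0 < sin u := sin_pos_of_pos_of_lt_pi hu0 (by linarith)
  have key := sub_pos.2 (sin_sq_mul_cos_add_two_mul_sq_mul_cos_lt hu0 (by linarith))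
  have heq : psiTerm b τ =
      2 * (3 * u * sin u - (sin u ^ 2 * cos u + 2 * u ^ 2 * cos u)) / (b * sin u) := by
    rw [psiTerm, ← hu, show b * τ = 2 * u by rw [hu]; ring, sin_two_mul]
    field_simp
    rw [hu]
    ring
  rw [heq]
  positivity

theorem continuousAt_psiTerm {b τ : ℝ} (hs : sin (b * τ / 2) ≠ 0) :
    ContinuousAt (psiTerm b) τ := by
  unfold psiTerm
  fun_prop (disch := exact hs)

theorem eventually_sin_mul_neg_nhdsLT {b q : ℝ} (hb : 0 < b) (hpole : sin (b * q / 2) = 0) :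
    ∀ᶠ τ in 𝓝[<] q, sin (b * τ) < 0 := by
  obtain ⟨k, hk⟩ := sin_eq_zero_iff.1 hpole
  -- just left of `q`, `b τ` lies in `(b q - π, b q)` and `b q ∈ 2πℤ`
  filter_upwards [Ioo_mem_nhdsLT (show q - π / b < q by linarith [div_pos pi_pos hb])]
    with τ ⟨hτ₁, hτ₂⟩
  have hτ₁' : b * q - π < b * τ := by
    have := mul_lt_mul_of_pos_left hτ₁ hb
    rwa [mul_sub, mul_div_cancel₀ _ hb.ne'] at this
  rw [show b * τ = (b * τ - b * q) + k * (2 * π) by linarith, sin_add_int_mul_two_pi]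
  exact sin_neg_of_neg_of_neg_pi_lt (by nlinarith) (by linarith)

theorem tendsto_psiTerm_nhdsLT_atTop {b q : ℝ} (hb : 0 < b) (hq : q ≠ 0)
    (hpole : sin (b * q / 2) = 0) : Tendsto (psiTerm b) (𝓝[<] q) atTop := by
  have hsin := eventually_sin_mul_neg_nhdsLT hb hpole
  have hτ0 : ∀ᶠ τ in 𝓝[<] q, τ ≠ 0 :=
    eventually_nhdsWithin_of_eventually_nhds (eventually_ne_nhds hq)
  have hcos : cos (b * q / 2) ≠ 0 := by
    intro h
    simpa [h, hpole] using cos_sq_add_sin_sq (b * q / 2)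
  have hnum : Tendsto (fun τ => -(b * τ ^ 2 * cos (b * τ / 2))) (𝓝[<] q)
      (𝓝 (-(b * q ^ 2 * cos (b * q / 2)))) :=
    (Continuous.tendsto (by fun_prop) q).mono_left nhdsWithin_le_nhds
  have hden : Tendsto (fun τ => sin (b * τ / 2)) (𝓝[<] q) (𝓝 0) :=
    hpole ▸ (Continuous.tendsto (by fun_prop) q).mono_left nhdsWithin_le_nhds
  have hcot : Tendsto (fun τ => -(b * τ ^ 2 * cos (b * τ / 2)) / sin (b * τ / 2))
      (𝓝[<] q) atTop := by
    refine hnum.div_atTop_of_mul_pos (by simp [hb.ne', hq, hcos]) hden ?_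
    filter_upwards [hsin, hτ0] with τ hs hτ
    have : -(b * τ ^ 2 * cos (b * τ / 2)) * sin (b * τ / 2) =
        b * τ ^ 2 * -sin (b * τ) / 2 := by
      rw [show b * τ = 2 * (b * τ / 2) by ring, sin_two_mul]
      ring_nf
    rw [this]
    have := neg_pos.2 hs
    positivity
  have hrest : Tendsto (fun τ => 3 * τ - sin (b * τ) / b) (𝓝[<] q)
      (𝓝 (3 * q - sin (b * q) / b)) :=
    (Continuous.tendsto (by fun_prop) q).mono_left nhdsWithin_le_nhds
  refine (hrest.add_atTop hcot).congr fun τ => ?_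
  simp only [psiTerm, neg_div]
  ring

theorem tendsto_psiSum_nhdsLT_atTop {n : ℕ} {b r : ℕ → ℝ} {q : ℝ}
    (hb : ∀ i ∈ Finset.Icc 1 n, 0 < b i) (hq : q ≠ 0) {i₀ : ℕ} (hi₀ : i₀ ∈ Finset.Icc 1 n)
    (hr : r i₀ ≠ 0) (hpole : sin (b i₀ * q / 2) = 0) : Tendsto (psiSum n b r) (𝓝[<] q) atTop := by
  have hbdd : ∀ i ∈ Finset.Icc 1 n, ∃ c, ∀ᶠ τ in 𝓝[<] q,
      c ≤ r i ^ 2 / 2 * psiTerm (b i) τ := by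
    intro i hi
    by_cases hi0 : sin (b i * q / 2) = 0
    · refine ⟨0, ?_⟩
      filter_upwards [(tendsto_psiTerm_nhdsLT_atTop (hb i hi) hq hi0).eventually_ge_atTop 0]
        with τ hτ
      positivity
    · exact ⟨_, ((continuousAt_const.mul (continuousAt_psiTerm hi0)).tendsto.mono_left
        nhdsWithin_le_nhds).eventually (eventually_ge_nhds (sub_one_lt _))⟩
  exact tendsto_finset_sum_atTop hi₀
    ((tendsto_psiTerm_nhdsLT_atTop (hb i₀ hi₀) hq hpole).const_mul_atTop (by positivity))
    fun i hi => hbdd i (mem_of_mem_erase hi)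

theorem psiSum_neg (n : ℕ) (b r : ℕ → ℝ) (τ : ℝ) : psiSum n b r (-τ) = -psiSum n b r τ := by
  simp only [psiSum_eq_sum_psiTerm, psiTerm_neg, mul_neg, sum_neg_distrib]

theorem tendsto_psiSum_nhdsGT_atBot {n : ℕ} {b r : ℕ → ℝ} {p : ℝ}
    (hb : ∀ i ∈ Finset.Icc 1 n, 0 < b i) (hp : p ≠ 0) {i₀ : ℕ} (hi₀ : i₀ ∈ Finset.Icc 1 n)
    (hr : r i₀ ≠ 0) (hpole : sin (b i₀ * p / 2) = 0) : Tendsto (psiSum n b r) (𝓝[>] p) atBot := by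
  have hneg := tendsto_psiSum_nhdsLT_atTop (r := r) hb (neg_ne_zero.2 hp) hi₀ hr
    (by rw [mul_neg, neg_div, sin_neg, hpole, neg_zero])
  rw [← tendsto_neg_atTop_iff]
  refine (hneg.comp (by simpa using tendsto_neg_nhdsGT_neg (a := -p))).congr fun τ => ?_
  simp [psiSum_neg]

theorem psiSum_pos {n : ℕ} {b r : ℕ → ℝ} {τ : ℝ} (hn : 1 ≤ n)
    (hb : ∀ i ∈ Finset.Icc 1 n, 0 < b i) (hr : ∀ i ∈ Finset.Icc 1 n, r i ≠ 0) (hτ : 0 < τ)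
    (hbτ : ∀ i ∈ Finset.Icc 1 n, b i * τ < 2 * π) :
    0 < psiSum n b r τ :=
  sum_pos (fun i hi => mul_pos (by have := hr i hi; positivity)
    (psiTerm_pos (hb i hi) hτ (hbτ i hi))) (nonempty_Icc.2 hn)

theorem continuousAt_psiSum {n : ℕ} {b r : ℕ → ℝ} {τ : ℝ}
    (hs : ∀ i ∈ Finset.Icc 1 n, sin (b i * τ / 2) ≠ 0) : ContinuousAt (psiSum n b r) τ :=
  tendsto_finsetSum _ fun i hi => continuousAt_const.mul (continuousAt_psiTerm (hs i hi))

theorem two_pi_div_lt_of_psiSum_eq_zero {n : ℕ} {b r : ℕ → ℝ} {τ : ℝ} (hn : 1 ≤ n)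
    (hb : ∀ i ∈ Finset.Icc 1 n, 0 < b i) (hb₁ : ∀ i ∈ Finset.Icc 1 n, b i ≤ b 1)
    (hr : ∀ i ∈ Finset.Icc 1 n, r i ≠ 0) (hτ : 0 < τ) (hsin : sin (b 1 * τ / 2) ≠ 0)
    (hψ : psiSum n b r τ = 0) : 2 * π / b 1 < τ := by
  rw [div_lt_iff₀' (hb 1 (by simpa using hn))]
  rcases lt_trichotomy (b 1 * τ) (2 * π) with h | h | h
  · exact absurd hψ (psiSum_pos hn hb hr hτ fun i hi =>
      (mul_le_mul_of_nonneg_right (hb₁ i hi) hτ.le).trans_lt h).ne'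
  · exact absurd (by rw [show b 1 * τ / 2 = π by linarith, sin_pi]) hsin
  · exact h

theorem sin_half_ne_zero_of_mem_Ioo {n : ℕ} {b : ℕ → ℝ} {τ : ℝ}
    (hb : ∀ i ∈ Finset.Icc 1 n, 0 < b i) (hb₁ : ∀ i ∈ Finset.Icc 1 n, b i ≤ b 1)
    (hb₂ : ∀ i ∈ Finset.Icc 1 n, i ≠ 1 → b i ≤ b 2) (h₂ : 0 < b 2)
    (hτ : τ ∈ Ioo (2 * π / b 1) (min (4 * π / b 1) (2 * π / b 2))) :
    ∀ i ∈ Finset.Icc 1 n, sin (b i * τ / 2) ≠ 0 := by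
  obtain ⟨hpτ, hτq⟩ := hτ
  intro i hi
  have h₁ : 0 < b 1 := (hb i hi).trans_le (hb₁ i hi)
  have hτ0 : 0 < τ := (div_pos (by positivity) h₁).trans hpτ
  have hlo : 2 * π < b 1 * τ := (div_lt_iff₀' h₁).1 hpτ
  have hhi₁ : b 1 * τ < 4 * π := (lt_div_iff₀' h₁).1 (hτq.trans_le (min_le_left _ _))
  have hhi₂ : b 2 * τ < 2 * π := (lt_div_iff₀' h₂).1 (hτq.trans_le (min_le_right _ _))
  have hi₁ : b i * τ ≤ b 1 * τ := mul_le_mul_of_nonneg_right (hb₁ i hi) hτ0.le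
  refine sin_ne_zero_of_pos_of_lt_two_pi (by have := hb i hi; positivity) (by linarith) ?_
  rcases eq_or_ne i 1 with rfl | hi1
  · exact (by linarith : π < b 1 * τ / 2).ne'
  · have := mul_le_mul_of_nonneg_right (hb₂ i hi hi1) hτ0.le
    exact (by linarith : b i * τ / 2 < π).ne

/-- Fix `n ≥ 2` and reals `b₁ > b₂ ≥ … ≥ bₙ > 0`, and `r ∈ ℝⁿ` with
`rᵢ > 0` for all `i`. Then the set
`{τ > 0 : sin(bᵢτ/2) ≠ 0 for all i, and ψ(τ, r) = 0}` is nonempty, has a least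
element `τ₁(r)`, and `τ₁(r) > 2π/b₁`. -/
theorem statement9 (n : ℕ) (hn : 2 ≤ n) (b : ℕ → ℝ)
    (hpos : ∀ i ∈ Finset.Icc 1 n, 0 < b i)
    (h12 : b 2 < b 1)
    (hanti : ∀ i j, 2 ≤ i → i ≤ j → j ≤ n → b j ≤ b i)
    (r : ℕ → ℝ) (hr : ∀ i ∈ Finset.Icc 1 n, 0 < r i) :
    ∃ τ₁ : ℝ,
      IsLeast {τ : ℝ | 0 < τ ∧ (∀ i ∈ Finset.Icc 1 n, Real.sin (b i * τ / 2) ≠ 0) ∧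
        psiSum n b r τ = 0} τ₁ ∧
      2 * Real.pi / b 1 < τ₁ := by
  have h1 : 1 ∈ Finset.Icc 1 n := by simp; omega
  have h2 : 2 ∈ Finset.Icc 1 n := by simp; omega
  have hb₁ := hpos 1 h1
  have hb₂ := hpos 2 h2
  have hr0 : ∀ i ∈ Finset.Icc 1 n, r i ≠ 0 := fun i hi => (hr i hi).ne'
  have hle₂ : ∀ i ∈ Finset.Icc 1 n, i ≠ 1 → b i ≤ b 2 := fun i hi hi1 => by
    simp only [Finset.mem_Icc] at hi
    exact hanti 2 i (by omega) (by omega) hi.2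
  have hle₁ : ∀ i ∈ Finset.Icc 1 n, b i ≤ b 1 := fun i hi => by
    rcases eq_or_ne i 1 with rfl | hi1
    exacts [le_rfl, (hle₂ i hi hi1).trans h12.le]
  -- the first pole of `ψ` after `0` and the next one
  set p := 2 * π / b 1 with hp
  set q := min (4 * π / b 1) (2 * π / b 2) with hq
  have hp0 : 0 < p := by positivity
  have hpq : p < q := lt_min ((div_lt_div_iff_of_pos_right hb₁).2 (by linarith [pi_pos]))
    (div_lt_div_of_pos_left (by positivity) hb₂ h12)
  have hadm : ∀ τ ∈ Ioo p q, ∀ i ∈ Finset.Icc 1 n, sin (b i * τ / 2) ≠ 0 :=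
    fun τ hτ => sin_half_ne_zero_of_mem_Ioo hpos hle₁ hle₂ hb₂ hτ
  obtain ⟨i₀, hi₀, hpole⟩ : ∃ i ∈ Finset.Icc 1 n, sin (b i * q / 2) = 0 := by
    rcases min_choice (4 * π / b 1) (2 * π / b 2) with h | h
    · refine ⟨1, h1, ?_⟩
      rw [hq, h, show b 1 * (4 * π / b 1) / 2 = 2 * π by field_simp; ring, sin_two_pi]
    · exact ⟨2, h2, by rw [hq, h, show b 2 * (2 * π / b 2) / 2 = π by field_simp, sin_pi]⟩
  obtain ⟨τ₁, ⟨hτ₁, hψτ₁⟩, hleast⟩ := exists_isLeast_zero_of_tendsto_atBot_atTop hpq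
    (fun τ hτ => (continuousAt_psiSum (hadm τ hτ)).continuousWithinAt)
    (tendsto_psiSum_nhdsGT_atBot hpos hp0.ne' h1 (hr0 1 h1)
      (by rw [hp, show b 1 * (2 * π / b 1) / 2 = π by field_simp, sin_pi]))
    (tendsto_psiSum_nhdsLT_atTop hpos (hp0.trans hpq).ne' hi₀ (hr0 i₀ hi₀) hpole)
  refine ⟨τ₁, ⟨⟨hp0.trans hτ₁.1, hadm τ₁ hτ₁, hψτ₁⟩, ?_⟩, hτ₁.1⟩
  rintro τ ⟨hτ, hsin, hψ⟩
  have hpτ := two_pi_div_lt_of_psiSum_eq_zero (by omega) hpos hle₁ hr0 hτ (hsin 1 h1) hψ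
  rcases lt_or_ge τ q with hτq | hqτ
  exacts [hleast ⟨⟨hpτ, hτq⟩, hψ⟩, (hτ₁.2.trans_le hqτ).le]
end

section
/- Fix an integer n ≥ 1 and reals b₁, …, bₙ > 0. Let τ > 0 satisfy sin(bᵢτ/2) ≠ 0 for all i, let h ∈ ℝ^{2n} and rᵢ = √(h_{2i−1}² + h_{2i}²). Then, with D(τ) = J̄⁻¹(e^{τJ̄} − I_{2n}) (which is invertible) and ∇_h ẑ(τ, h) the row vector with entries (∂ẑ/∂h_j)(τ, h) = h_j·(bᵢτ − sin(bᵢτ))/bᵢ for j ∈ {2i−1, 2i}, one has the explicit formula: ∇_h ẑ(τ, h) · D(τ)⁻¹ · ( x̂(τ, h) − τ·ĥ(τ, h) ) = Σ_{i=1}^{n} rᵢ² · ( sin(bᵢτ) − bᵢτ ) · ( bᵢτ·cos(bᵢτ/2) − 2·sin(bᵢτ/2) ) / ( 2·bᵢ·sin(bᵢτ/2) ). -/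
open Real Matrix

/-- The `2n×2n` block-diagonal matrix `J̄` whose `i`-th `2×2` diagonal block is
`[[0, bᵢ], [−bᵢ, 0]]`. -/
noncomputable def Jbar (n : ℕ) (b : Fin n → ℝ) :
    Matrix (Fin 2 × Fin n) (Fin 2 × Fin n) ℝ :=
  Matrix.blockDiagonal fun i => !![0, b i; -b i, 0]

/-- `D(τ) = J̄⁻¹(e^{τJ̄} − I)`. -/
noncomputable def Dmat (n : ℕ) (b : Fin n → ℝ) (τ : ℝ) :
    Matrix (Fin 2 × Fin n) (Fin 2 × Fin n) ℝ :=
  (Jbar n b)⁻¹ * (NormedSpace.exp (τ • Jbar n b) - 1)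

/-- The covector `ĥ(t, h) = e^{tJ̄}h` of the nilpotent geodesic flow. -/
noncomputable def hhat (n : ℕ) (b : Fin n → ℝ) (t : ℝ) (h : Fin 2 × Fin n → ℝ) :
    Fin 2 × Fin n → ℝ :=
  (NormedSpace.exp (t • Jbar n b)).mulVec h

/-- The horizontal component `x̂(t, h) = J̄⁻¹(e^{tJ̄} − I)h`. -/
noncomputable def xhat (n : ℕ) (b : Fin n → ℝ) (t : ℝ) (h : Fin 2 × Fin n → ℝ) :
    Fin 2 × Fin n → ℝ :=
  (Dmat n b t).mulVec h

/-- The gradient (row vector) of the vertical component `ẑ` in `h`: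
`(∂ẑ/∂h_j)(τ, h) = h_j·(bᵢτ − sin(bᵢτ))/bᵢ` for `j ∈ {2i−1, 2i}`;
the coordinate `h_{2i−1}` is the `(0, i)` entry of `h` and `h_{2i}` its `(1, i)` entry. -/
noncomputable def gradz (n : ℕ) (b : Fin n → ℝ) (τ : ℝ) (h : Fin 2 × Fin n → ℝ) :
    Fin 2 × Fin n → ℝ :=
  fun j => h j * (b j.2 * τ - Real.sin (b j.2 * τ)) / b j.2

/-!
Identify `ℂⁿ` with a commutative subalgebra of `M_{2n}(ℝ)` by sending `z` to the block-diagonal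
matrix whose `i`-th block is multiplication by `zᵢ` on `ℂ ≅ ℝ²`. The block `[[0, bᵢ], [−bᵢ, 0]]`
of `J̄` is multiplication by `−i bᵢ`, so `e^{τJ̄}`, `D(τ)` and `D(τ)⁻¹` lie in this subalgebra and
`D(τ)⁻¹(x̂ − τĥ) = (1 − τ D(τ)⁻¹ e^{τJ̄}) h` has the symbol `wᵢ = 1 − iθᵢ / (e^{iθᵢ} − 1)`,
`θᵢ = bᵢτ`. Since `∇_h ẑ` is `h` scaled by the real numbers `(θᵢ − sin θᵢ)/bᵢ` on each block, the
pairing only sees `Re wᵢ = 1 − (θᵢ/2) cot(θᵢ/2)`, weighted by `rᵢ²`.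
-/

open Complex in
noncomputable def complexBlockDiagonal (ι : Type*) [Fintype ι] [DecidableEq ι] :
    (ι → ℂ) →ₐ[ℝ] Matrix (Fin 2 × ι) (Fin 2 × ι) ℝ where
  toFun z := blockDiagonal fun i => Algebra.leftMulMatrix basisOneI (z i)
  map_one' := by simp [← Pi.one_def]
  map_mul' z w := by simp [← blockDiagonal_mul]
  map_zero' := by simp [← Pi.zero_def]
  map_add' z w := by simp [← blockDiagonal_add, Pi.add_def]
  commutes' r := by simp [Algebra.algebraMap_eq_smul_one, ← Pi.one_def, ← Pi.smul_def]

section complexBlockDiagonal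

variable {ι : Type*} [Fintype ι] [DecidableEq ι]

lemma complexBlockDiagonal_apply (z : ι → ℂ) :
    complexBlockDiagonal ι z =
      blockDiagonal fun i => !![(z i).re, -(z i).im; (z i).im, (z i).re] := by
  simp [complexBlockDiagonal, Algebra.leftMulMatrix_complex]

lemma continuous_complexBlockDiagonal : Continuous (complexBlockDiagonal ι) :=
  (complexBlockDiagonal ι).toLinearMap.continuous_of_finiteDimensional

attribute [local instance] Matrix.linftyOpNormedRing in
lemma exp_complexBlockDiagonal (z : ι → ℂ) :
    NormedSpace.exp (complexBlockDiagonal ι z) =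
      complexBlockDiagonal ι fun i => Complex.exp (z i) := by
  refine (NormedSpace.map_exp _ continuous_complexBlockDiagonal z).symm.trans ?_
  rw [Pi.exp_def]
  simp_rw [Complex.exp_eq_exp_ℂ]

lemma inv_complexBlockDiagonal {z : ι → ℂ} (hz : ∀ i, z i ≠ 0) :
    (complexBlockDiagonal ι z)⁻¹ = complexBlockDiagonal ι z⁻¹ := by
  refine Matrix.inv_eq_right_inv ?_
  rw [← map_mul, ← map_one (complexBlockDiagonal ι)]
  congr 1
  funext i
  simp [hz i]

lemma dotProduct_complexBlockDiagonal_mulVec (c : ι → ℝ) (z : ι → ℂ) (h : Fin 2 × ι → ℝ) :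
    (fun j => c j.2 * h j) ⬝ᵥ complexBlockDiagonal ι z *ᵥ h =
      ∑ i, c i * (z i).re * (h (0, i) ^ 2 + h (1, i) ^ 2) := by
  simp only [complexBlockDiagonal_apply, dotProduct, mulVec, Fintype.sum_prod_type,
    blockDiagonal_apply, of_apply, cons_val', cons_val_fin_one, ite_mul, zero_mul,
    Finset.sum_ite_eq, Finset.mem_univ, if_true, Fin.sum_univ_two, cons_val_zero, cons_val_one,
    ← Finset.sum_add_distrib]
  exact Finset.sum_congr rfl fun i _ => by ring

end complexBlockDiagonal

section complexSymbols

open Complex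

lemma normSq_exp_mul_I_sub_one (θ : ℝ) :
    normSq (exp (θ * I) - 1) = 4 * Real.sin (θ / 2) ^ 2 := by
  have hcos : Real.cos θ = 1 - 2 * Real.sin (θ / 2) ^ 2 := by
    rw [← Real.cos_two_mul_eq_one_sub, mul_div_cancel₀ _ two_ne_zero]
  have hsin : Real.sin θ = 2 * Real.sin (θ / 2) * Real.cos (θ / 2) := by
    rw [← Real.sin_two_mul, mul_div_cancel₀ _ two_ne_zero]
  simp only [normSq_apply, sub_re, sub_im, exp_ofReal_mul_I_re, exp_ofReal_mul_I_im, one_re,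
    one_im, hcos, hsin]
  linear_combination (4 * Real.sin (θ / 2) ^ 2) * Real.sin_sq_add_cos_sq (θ / 2)

lemma exp_mul_I_ne_one {θ : ℝ} (hθ : Real.sin (θ / 2) ≠ 0) : exp (θ * I) ≠ 1 := by
  rw [Ne, ← sub_eq_zero, ← normSq_eq_zero, normSq_exp_mul_I_sub_one]
  positivity

lemma re_mul_I_div_exp_mul_I_sub_one {θ : ℝ} (hθ : Real.sin (θ / 2) ≠ 0) :
    ((θ : ℂ) * I / (exp (θ * I) - 1)).re = θ * Real.cos (θ / 2) / (2 * Real.sin (θ / 2)) := by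
  have hsin : Real.sin θ = 2 * Real.sin (θ / 2) * Real.cos (θ / 2) := by
    rw [← Real.sin_two_mul, mul_div_cancel₀ _ two_ne_zero]
  rw [div_re, normSq_exp_mul_I_sub_one]
  simp only [mul_re, mul_im, ofReal_re, ofReal_im, I_re, I_im, sub_re, sub_im,
    exp_ofReal_mul_I_re, exp_ofReal_mul_I_im, one_im, hsin]
  field_simp
  ring

lemma ne_zero_of_sin_mul_div_two_ne_zero {β τ : ℝ} (h : Real.sin (β * τ / 2) ≠ 0) : β ≠ 0 := by
  rintro rfl
  simp at h

/-- The block of `D(τ)` for the invariant `β`, as a complex number: the block of `J̄` is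
multiplication by `−iβ`. -/
noncomputable def dmatSymbol (β τ : ℝ) : ℂ :=
  (exp (-(↑(β * τ) * I)) - 1) / -(β * I)

variable {β τ : ℝ} (hβτ : Real.sin (β * τ / 2) ≠ 0)
include hβτ

lemma exp_neg_mul_I_ne_one : exp (-(↑(β * τ) * I)) ≠ 1 := by
  rw [← neg_mul, ← ofReal_neg]
  exact exp_mul_I_ne_one (by rwa [neg_div, Real.sin_neg, neg_ne_zero])

lemma dmatSymbol_ne_zero : dmatSymbol β τ ≠ 0 :=
  div_ne_zero (sub_ne_zero.mpr (exp_neg_mul_I_ne_one hβτ)) <|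
    neg_ne_zero.mpr <| mul_ne_zero (ofReal_ne_zero.mpr (ne_zero_of_sin_mul_div_two_ne_zero hβτ))
      I_ne_zero

lemma dmatSymbol_inv_mul_sub :
    (dmatSymbol β τ)⁻¹ * (dmatSymbol β τ - τ * exp (-(↑(β * τ) * I))) =
      1 - ↑(β * τ) * I / (exp (↑(β * τ) * I) - 1) := by
  have hu := sub_ne_zero.mpr (exp_mul_I_ne_one hβτ)
  have hv := sub_ne_zero.mpr (exp_neg_mul_I_ne_one hβτ)
  have hβ := ofReal_ne_zero.mpr (ne_zero_of_sin_mul_div_two_ne_zero hβτ)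
  have huv : exp (↑(β * τ) * I) * exp (-(↑(β * τ) * I)) = 1 := by
    rw [← Complex.exp_add, add_neg_cancel, Complex.exp_zero]
  rw [dmatSymbol]
  field_simp
  push_cast at huv ⊢
  linear_combination (β * τ * I) * huv

end complexSymbols

section nilpotentGeodesics

open Complex

variable {n : ℕ} {b : Fin n → ℝ}

lemma Jbar_eq_complexBlockDiagonal :
    Jbar n b = complexBlockDiagonal (Fin n) fun i => -(b i * I) := by
  rw [Jbar, complexBlockDiagonal_apply]
  congr 1
  funext i
  ext k l
  fin_cases k <;> fin_cases l <;> simp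

lemma exp_smul_Jbar (τ : ℝ) :
    NormedSpace.exp (τ • Jbar n b) =
      complexBlockDiagonal (Fin n) fun i => exp (-(↑(b i * τ) * I)) := by
  rw [Jbar_eq_complexBlockDiagonal, ← map_smul, exp_complexBlockDiagonal]
  congr 1
  funext i
  simp only [Pi.smul_apply, real_smul, ofReal_mul]
  ring_nf

lemma Dmat_eq_complexBlockDiagonal (τ : ℝ) (hb : ∀ i, b i ≠ 0) :
    Dmat n b τ = complexBlockDiagonal (Fin n) fun i => dmatSymbol (b i) τ := by
  rw [Dmat, exp_smul_Jbar, Jbar_eq_complexBlockDiagonal,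
    inv_complexBlockDiagonal (fun i => by simpa using hb i), ← map_one (complexBlockDiagonal _),
    ← map_sub, ← map_mul]
  congr 1
  funext i
  simp [dmatSymbol, div_eq_inv_mul]

lemma inv_Dmat_mulVec_xhat_sub_smul_hhat {τ : ℝ} (hsin : ∀ i, Real.sin (b i * τ / 2) ≠ 0)
    (h : Fin 2 × Fin n → ℝ) :
    (Dmat n b τ)⁻¹ *ᵥ (xhat n b τ h - τ • hhat n b τ h) =
      complexBlockDiagonal (Fin n)
        (fun i => 1 - ↑(b i * τ) * I / (exp (↑(b i * τ) * I) - 1)) *ᵥ h := by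
  rw [xhat, hhat, ← smul_mulVec, ← sub_mulVec, mulVec_mulVec,
    Dmat_eq_complexBlockDiagonal τ fun i => ne_zero_of_sin_mul_div_two_ne_zero (hsin i),
    exp_smul_Jbar, inv_complexBlockDiagonal fun i => dmatSymbol_ne_zero (hsin i),
    ← map_smul, ← map_sub, ← map_mul]
  congr 2
  funext i
  simpa using dmatSymbol_inv_mul_sub (hsin i)

end nilpotentGeodesics

theorem statement16_general (n : ℕ) (b : Fin n → ℝ)
    (τ : ℝ) (hsin : ∀ i, Real.sin (b i * τ / 2) ≠ 0)
    (h : Fin 2 × Fin n → ℝ) :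
    gradz n b τ h ⬝ᵥ
        (Dmat n b τ)⁻¹.mulVec (xhat n b τ h - τ • hhat n b τ h) =
      ∑ i, Real.sqrt (h (0, i) ^ 2 + h (1, i) ^ 2) ^ 2 *
        (Real.sin (b i * τ) - b i * τ) *
        (b i * τ * Real.cos (b i * τ / 2) - 2 * Real.sin (b i * τ / 2)) /
        (2 * b i * Real.sin (b i * τ / 2)) := by
  set c : Fin n → ℝ := fun i => (b i * τ - Real.sin (b i * τ)) / b i
  have hgradz : gradz n b τ h = fun j => c j.2 * h j := by
    funext j
    rw [gradz, mul_div_assoc, mul_comm, div_mul_eq_mul_div]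
  rw [hgradz, inv_Dmat_mulVec_xhat_sub_smul_hhat hsin, dotProduct_complexBlockDiagonal_mulVec]
  refine Finset.sum_congr rfl fun i _ => ?_
  have hb := ne_zero_of_sin_mul_div_two_ne_zero (hsin i)
  have hs := hsin i
  rw [Complex.sub_re, Complex.one_re, re_mul_I_div_exp_mul_I_sub_one hs,
    Real.sq_sqrt (by positivity)]
  simp only [c]
  field_simp
  ring

/-- For `n ≥ 1`, `b₁, …, bₙ > 0`, `τ > 0` with `sin(bᵢτ/2) ≠ 0`
for all `i`, and `h ∈ ℝ^{2n}` with `rᵢ = √(h_{2i−1}² + h_{2i}²)`: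
`∇_h ẑ(τ,h) · D(τ)⁻¹ · (x̂(τ,h) − τ·ĥ(τ,h))
  = Σ_i rᵢ²·(sin(bᵢτ) − bᵢτ)·(bᵢτ·cos(bᵢτ/2) − 2·sin(bᵢτ/2))/(2·bᵢ·sin(bᵢτ/2))`. -/
theorem statement16 (n : ℕ) (hn : 1 ≤ n) (b : Fin n → ℝ) (hb : ∀ i, 0 < b i)
    (τ : ℝ) (hτ : 0 < τ) (hsin : ∀ i, Real.sin (b i * τ / 2) ≠ 0)
    (h : Fin 2 × Fin n → ℝ) :
    gradz n b τ h ⬝ᵥ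
        (Dmat n b τ)⁻¹.mulVec (xhat n b τ h - τ • hhat n b τ h) =
      ∑ i, Real.sqrt (h (0, i) ^ 2 + h (1, i) ^ 2) ^ 2 *
        (Real.sin (b i * τ) - b i * τ) *
        (b i * τ * Real.cos (b i * τ / 2) - 2 * Real.sin (b i * τ / 2)) /
        (2 * b i * Real.sin (b i * τ / 2)) :=
  statement16_general n b τ hsin h
end
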